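/- arXiv:1509.07915 — 3 statements merged into one kernel-verified Lean document; each statement's English description precedes it below -/
import Mathlib

section
/- Let G be a group acting on a topological space X by homeomorphisms. Let L₀ = {(β,h,l) ∈ C(I,X) × G × G : β(0) = (h·l⁻¹)·β(1)} with the (G×G)-action (a,b)·(β,h,l) = (a·β, a·h·b⁻¹, a·l·b⁻¹), and let L = {(α,g) ∈ C(I,X) × G : α(0) = g·α(1)} with the G-action k·(α,g) = (k·α, k·g·k⁻¹). Then the action groupoid (G×G) ⋉ L₀ is equivalent as a category to the action groupoid G ⋉ L; an equivalence is induced by the assignment (α,g) ↦ (α, g, 1) on objects and k ↦ (k,k) on group elements. -/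
open CategoryTheory

/-- The object space `L₀ = {(β, h, l) ∈ C(I,X) × G × G : β 0 = (h * l⁻¹) • β 1}` of the free
loop groupoid. -/
abbrev FreeLoop₀ (G X : Type*) [Group G] [TopologicalSpace X] [MulAction G X]
    [ContinuousConstSMul G X] : Type _ :=
  {p : C(unitInterval, X) × G × G // p.1 0 = (p.2.1 * p.2.2⁻¹) • p.1 1}

/-- The object space `L = {(α, g) ∈ C(I,X) × G : α 0 = g • α 1}`. -/
abbrev FreeLoop (G X : Type*) [Group G] [TopologicalSpace X] [MulAction G X]
    [ContinuousConstSMul G X] : Type _ :=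
  {q : C(unitInterval, X) × G // q.1 0 = q.2 • q.1 1}

variable (G X : Type*) [Group G] [TopologicalSpace X] [MulAction G X] [ContinuousConstSMul G X]

/-- The `(G × G)`-action `(a, b) • (β, h, l) = (a • β, a * h * b⁻¹, a * l * b⁻¹)` on `L₀`. -/
instance : SMul (G × G) (FreeLoop₀ G X) :=
  ⟨fun ab p => ⟨(ab.1 • p.1.1, ab.1 * p.1.2.1 * ab.2⁻¹, ab.1 * p.1.2.2 * ab.2⁻¹), by
    obtain ⟨⟨β, h, l⟩, hp⟩ := p
    simp only [ContinuousMap.smul_apply] at *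
    rw [hp, smul_smul, smul_smul]
    congr 1
    group⟩⟩

@[simp] lemma FreeLoop₀.coe_smul (ab : G × G) (p : FreeLoop₀ G X) :
    (ab • p).val = (ab.1 • p.1.1, ab.1 * p.1.2.1 * ab.2⁻¹, ab.1 * p.1.2.2 * ab.2⁻¹) := rfl

instance : MulAction (G × G) (FreeLoop₀ G X) where
  one_smul p := Subtype.ext <| by simp
  mul_smul ab cd p := Subtype.ext <| by
    simp [FreeLoop₀.coe_smul, mul_smul, mul_assoc]

/-- The `G`-action `k • (α, g) = (k • α, k * g * k⁻¹)` on `L`. -/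
instance : SMul G (FreeLoop G X) :=
  ⟨fun k q => ⟨(k • q.1.1, k * q.1.2 * k⁻¹), by
    obtain ⟨⟨α, g⟩, hq⟩ := q
    simp only [ContinuousMap.smul_apply] at *
    rw [hq, smul_smul, smul_smul]
    congr 1
    group⟩⟩

@[simp] lemma FreeLoop.coe_smul (k : G) (q : FreeLoop G X) :
    (k • q).val = (k • q.1.1, k * q.1.2 * k⁻¹) := rfl

instance : MulAction G (FreeLoop G X) where
  one_smul q := Subtype.ext <| by simp
  mul_smul k k' q := Subtype.ext <| by
    simp [FreeLoop.coe_smul, mul_smul, mul_assoc]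

open ActionCategory in
lemma ActionCategory.eqToHom_val {M : Type*} [Monoid M] {Y : Type*} [MulAction M Y]
    {a b : ActionCategory M Y} (h : a = b) : (eqToHom h).val = 1 := by
  subst h; rfl

lemma hom_rel {M : Type*} [Monoid M] {Y : Type*} [MulAction M Y]
    {a b : ActionCategory M Y} (f : a ⟶ b) : f.val • a.back = b.back := f.2

/-- The map `L → L₀`, `(α, g) ↦ (α, g, 1)`. -/
def toL₀ (q : FreeLoop G X) : FreeLoop₀ G X := ⟨(q.1.1, q.1.2, 1), by simpa using q.2⟩

/-- The map `L₀ → L`, `(β, h, l) ↦ (β, h * l⁻¹)`. -/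
def toL (p : FreeLoop₀ G X) : FreeLoop G X := ⟨(p.1.1, p.1.2.1 * p.1.2.2⁻¹), p.2⟩

lemma smul_toL₀ (k : G) (q : FreeLoop G X) :
    ((k, k) : G × G) • toL₀ G X q = toL₀ G X (k • q) :=
  Subtype.ext <| by simp [toL₀]

lemma smul_toL (ab : G × G) (p : FreeLoop₀ G X) :
    ab.1 • toL G X p = toL G X (ab • p) :=
  Subtype.ext <| by
    apply Prod.ext
    · rfl
    · show ab.1 * (p.1.2.1 * p.1.2.2⁻¹) * ab.1⁻¹ = _
      simp [toL]
      group

/-- Forward functor `G ⋉ L ⥤ (G × G) ⋉ L₀`. -/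
def fwdFunctor : ActionCategory G (FreeLoop G X) ⥤ ActionCategory (G × G) (FreeLoop₀ G X) where
  obj a := ActionCategory.objEquiv _ _ (toL₀ G X a.back)
  map {a b} f := ⟨(f.val, f.val), by
    show ((f.val, f.val) : G × G) • toL₀ G X a.back = toL₀ G X b.back
    rw [smul_toL₀, hom_rel f]⟩
  map_id _ := rfl
  map_comp _ _ := rfl

/-- Backward functor `(G × G) ⋉ L₀ ⥤ G ⋉ L`. -/
def bwdFunctor : ActionCategory (G × G) (FreeLoop₀ G X) ⥤ ActionCategory G (FreeLoop G X) where
  obj p := ActionCategory.objEquiv _ _ (toL G X p.back)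
  map {p q} f := ⟨f.val.1, by
    show f.val.1 • toL G X p.back = toL G X q.back
    rw [smul_toL, hom_rel f]⟩
  map_id _ := rfl
  map_comp _ _ := rfl

@[simp] lemma fwdFunctor_map_val {a b : ActionCategory G (FreeLoop G X)} (f : a ⟶ b) :
    ((fwdFunctor G X).map f).val = (f.val, f.val) := rfl

@[simp] lemma bwdFunctor_map_val {p q : ActionCategory (G × G) (FreeLoop₀ G X)} (f : p ⟶ q) :
    ((bwdFunctor G X).map f).val = f.val.1 := rfl

/-- The action groupoid `(G × G) ⋉ L₀` is equivalent to the action groupoid `G ⋉ L`, via an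
equivalence induced by `(α, g) ↦ (α, g, 1)` on objects and `k ↦ (k, k)` on group elements. -/
theorem stmt2 :
    ∃ e : ActionCategory G (FreeLoop G X) ≌ ActionCategory (G × G) (FreeLoop₀ G X),
      (∀ q : FreeLoop G X,
        ((e.functor.obj (ActionCategory.objEquiv G (FreeLoop G X) q)).back :
            C(unitInterval, X) × G × G) = (q.1.1, q.1.2, 1)) ∧
      (∀ (a b : ActionCategory G (FreeLoop G X)) (f : a ⟶ b),
        (e.functor.map f).val = (f.val, f.val)) := by
  have hobj : ∀ a : ActionCategory G (FreeLoop G X),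
      (fwdFunctor G X ⋙ bwdFunctor G X).obj a = a := by
    intro a
    refine Functor.Elements.ext ((fwdFunctor G X ⋙ bwdFunctor G X).obj a) a rfl ?_
    show (1 : G) • toL G X (toL₀ G X a.back) = a.back
    rw [one_smul]
    apply Subtype.ext
    simp [toL, toL₀]
  refine ⟨⟨fwdFunctor G X, bwdFunctor G X,
    NatIso.ofComponents (fun a => eqToIso (hobj a).symm) ?_,
    NatIso.ofComponents (fun p => @asIso _ _ _ _
      (⟨((1 : G), p.back.1.2.2⁻¹), ?_⟩ :
        (bwdFunctor G X ⋙ fwdFunctor G X).obj p ⟶ p) (IsIso.of_groupoid _)) ?_, ?_⟩, fun q => rfl, fun a b f => rfl⟩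
  · intro a b f
    simp only [eqToIso.hom, Functor.id_map, Functor.comp_map]
    apply Subtype.ext
    simp only [ActionCategory.comp_val, ActionCategory.eqToHom_val, one_mul, mul_one]
    rfl
  · show (((1 : G), p.back.1.2.2⁻¹) : G × G) • toL₀ G X (toL G X p.back) = p.back
    apply Subtype.ext
    simp [toL, toL₀, mul_assoc]
  · intro p q f
    have hl : q.back.1.2.2 = f.val.1 * p.back.1.2.2 * f.val.2⁻¹ := by
      rw [← hom_rel f]; rfl
    apply Subtype.ext
    simp only [Functor.comp_map, asIso_hom, Functor.id_map, ActionCategory.comp_val,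
      fwdFunctor_map_val, bwdFunctor_map_val]
    apply Prod.ext
    · show (1 : G) * f.val.1 = f.val.1 * 1
      rw [one_mul, mul_one]
    · show q.back.1.2.2⁻¹ * f.val.1 = f.val.2 * p.back.1.2.2⁻¹
      rw [hl]
      group
  · intro a
    apply Subtype.ext
    rw [ActionCategory.comp_val]
    show (((1 : G), ((toL₀ G X a.back).val.2.2)⁻¹) : G × G) *
        ((eqToHom (hobj a).symm).val, (eqToHom (hobj a).symm).val) = 1
    rw [ActionCategory.eqToHom_val]
    simp [toL₀]
    rfl
end

section
/- Let G and H be groups with the discrete topology acting on topological spaces X and Y by homeomorphisms, let φ : G → H be a group homomorphism and f : X → Y a continuous map with f(g·x) = φ(g)·f(x) for all g ∈ G, x ∈ X. Let W = {(x₁,x₂,h) ∈ X × X × H : h·f(x₁) = f(x₂)} with the subspace topology, and assume the map Θ : G × X → W, Θ(g,x) = (x, g·x, φ(g)), is a bijection whose inverse is continuous. Then for all continuous paths α, β : I → X and every h ∈ H satisfying h·f(α(r)) = f(β(r)) for all r ∈ I, there exists a unique g ∈ G with φ(g) = h and g·α(r) = β(r) for all r ∈ I. -/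
/-- Fully faithfulness of an equivariant map `φ ⋉ f : G ⋉ X → H ⋉ Y` of translation groupoids
(with `G`, `H` discrete), expressed via the map `Θ : G × X → W`, `Θ (g, x) = (x, g • x, φ g)`
onto `W = {(x₁, x₂, h) : h • f x₁ = f x₂}`, implies the fully faithfulness condition for the
induced map on path spaces: for all continuous paths `α, β : I → X` and `h ∈ H` with
`h • f (α r) = f (β r)` for all `r`, there is a unique `g ∈ G` with `φ g = h` and
`g • α r = β r` for all `r`. -/
theorem stmt8 (G H X Y : Type*) [Group G] [Group H]
    [TopologicalSpace G] [DiscreteTopology G] [TopologicalSpace H] [DiscreteTopology H]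
    [TopologicalSpace X] [TopologicalSpace Y]
    [MulAction G X] [MulAction H Y] [ContinuousConstSMul G X] [ContinuousConstSMul H Y]
    (φ : G →* H) (f : X → Y) (hf : Continuous f)
    (hequi : ∀ (g : G) (x : X), f (g • x) = φ g • f x)
    (Θinv : {w : X × X × H // w.2.2 • f w.1 = f w.2.1} → G × X)
    (hΘcont : Continuous Θinv)
    (hΘleft : ∀ (g : G) (x : X), Θinv ⟨(x, g • x, φ g), (hequi g x).symm⟩ = (g, x))
    (hΘright : ∀ w : {w : X × X × H // w.2.2 • f w.1 = f w.2.1},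
      (⟨((Θinv w).2, (Θinv w).1 • (Θinv w).2, φ (Θinv w).1),
        (hequi (Θinv w).1 (Θinv w).2).symm⟩ :
          {w : X × X × H // w.2.2 • f w.1 = f w.2.1}) = w) :
    ∀ (α β : C(unitInterval, X)) (h : H), (∀ r : unitInterval, h • f (α r) = f (β r)) →
      ∃! g : G, φ g = h ∧ ∀ r : unitInterval, g • α r = β r := by
  intro α β h hr
  -- the path in W
  set w : unitInterval → {w : X × X × H // w.2.2 • f w.1 = f w.2.1} :=
    fun r => ⟨(α r, β r, h), hr r⟩ with hw
  have hwcont : Continuous w := by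
    apply Continuous.subtype_mk
    exact (α.continuous).prodMk ((β.continuous).prodMk continuous_const)
  have hgc : Continuous fun r => (Θinv (w r)).1 := (continuous_fst.comp (hΘcont.comp hwcont))
  -- constant since G is discrete and I is connected
  have hconst : ∀ r : unitInterval, (Θinv (w r)).1 = (Θinv (w 0)).1 := by
    intro r
    have := (IsPreconnected.subsingleton (isPreconnected_univ.image _ hgc.continuousOn)
      (Set.mem_image_of_mem _ (Set.mem_univ r))
      (Set.mem_image_of_mem _ (Set.mem_univ 0)))
    exact this
  set g : G := (Θinv (w 0)).1 with hg
  have key : ∀ r : unitInterval, (Θinv (w r)).2 = α r ∧ g • α r = β r ∧ φ g = h := by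
    intro r
    have h1 := hΘright (w r)
    have h2 := congrArg Subtype.val h1
    simp only [hw] at h2
    have e1 : (Θinv (w r)).2 = α r := congrArg Prod.fst h2
    have e2 : (Θinv (w r)).1 • (Θinv (w r)).2 = β r := congrArg (fun p => p.2.1) h2
    have e3 : φ (Θinv (w r)).1 = h := congrArg (fun p => p.2.2) h2
    rw [hconst r] at e2 e3
    rw [e1] at e2
    exact ⟨e1, e2, e3⟩
  refine ⟨g, ⟨(key 0).2.2, fun r => (key r).2.1⟩, ?_⟩
  rintro g' ⟨hφ, hact⟩
  have : w 0 = ⟨(α 0, g' • α 0, φ g'), (hequi g' (α 0)).symm⟩ := by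
    apply Subtype.ext
    simp [hw, hact 0, hφ]
  have := congrArg (fun p => (Θinv p).1) this
  rw [hΘleft g'] at this
  exact this.symm.trans (hg ▸ rfl)
end

section
/- Let H be a group acting on a topological space Y by homeomorphisms, let X be a topological space and f : X → Y a continuous map. Suppose there exist an open cover {U_a}_{a ∈ A} of Y, elements h_a ∈ H, and continuous maps s_a : U_a → X such that f(s_a(y)) = h_a·y for all y ∈ U_a and all a ∈ A. Then for every continuous map γ : I → Y there exist n ≥ 1, a subdivision 0 = t₀ ≤ t₁ ≤ ⋯ ≤ tₙ = 1, elements h₁, …, hₙ ∈ H, and continuous maps α_i : [t_{i−1}, t_i] → X for 1 ≤ i ≤ n, such that f(α_i(r)) = h_i·γ(r) for all r ∈ [t_{i−1}, t_i] and each i. -/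
/-- Piecewise lifting of paths, up to the `H`-action, along a map `f : X → Y` admitting local
sections twisted by group elements: if `{U a}` is an open cover of `Y` and for each `a` there
are `h a ∈ H` and a continuous `s a : U a → X` with `f (s a y) = h a • y` on `U a`, then every
continuous path `γ : I → Y` admits a subdivision `0 = t₀ ≤ t₁ ≤ ⋯ ≤ tₙ = 1` (`n ≥ 1`),
elements `g 0, …, g (n-1) ∈ H` and continuous maps `α i : [t i, t (i+1)] → X` with
`f (α i r) = g i • γ r` on `[t i, t (i+1)]` for each `i < n`. -/
theorem stmt9 (H X Y : Type*) [Group H] [TopologicalSpace X] [TopologicalSpace Y]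
    [MulAction H Y] [ContinuousConstSMul H Y]
    (f : X → Y) (hf : Continuous f)
    (A : Type*) (U : A → Set Y) (hUopen : ∀ a, IsOpen (U a)) (hUcover : ∀ y : Y, ∃ a, y ∈ U a)
    (h : A → H) (s : ∀ a, C(U a, X)) (hs : ∀ (a : A) (y : U a), f (s a y) = h a • (y : Y)) :
    ∀ γ : C(unitInterval, Y), ∃ (n : ℕ), 1 ≤ n ∧
      ∃ (t : ℕ → unitInterval) (g : ℕ → H)
        (α : ∀ i : ℕ, C((Set.Icc (t i) (t (i + 1)) : Set unitInterval), X)),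
        t 0 = 0 ∧ t n = 1 ∧ (∀ i < n, t i ≤ t (i + 1)) ∧
        ∀ i < n, ∀ r : (Set.Icc (t i) (t (i + 1)) : Set unitInterval),
          f (α i r) = g i • γ (r : unitInterval) := by
  intro γ
  obtain ⟨t, ht0, htmono, ⟨m, hm⟩, hsub⟩ :=
    exists_monotone_Icc_subset_open_cover_unitInterval
      (c := fun a => γ ⁻¹' (U a)) (fun a => (hUopen a).preimage γ.continuous)
      (fun x _ => by
        obtain ⟨a, ha⟩ := hUcover (γ x)
        exact Set.mem_iUnion.2 ⟨a, ha⟩)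
  choose a ha using hsub
  refine ⟨max m 1, le_max_right _ _, t, fun i => h (a i), fun i =>
    ⟨fun r => s (a i) ⟨γ r, ha i r.2⟩, ?_⟩, ht0, hm _ (le_max_left _ _), ?_, ?_⟩
  · exact (s (a i)).continuous.comp
      ((γ.continuous.comp continuous_subtype_val).subtype_mk _)
  · exact fun i _ => htmono (Nat.le_succ i)
  · intro i _ r
    exact hs (a i) ⟨γ r, ha i r.2⟩
end
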